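/- arXiv:1807.01492 — 5 statements merged into one kernel-verified Lean document; each statement's English description precedes it below -/
import Mathlib

section
/- Let m ∈ ℕ and s ∈ {0,1,…,2^m−1}^d, p ∈ {1/2^m,…,1−1/2^m}^d. If Ω_m(s,p) is nonempty, then every box B ∈ Ω_m(s,p) satisfies 2^{−m} < vol_d(B) ≤ (1 − 2^{−m})^{A_m(s)}, and consequently A_m(s) ≤ log(2) · m · 2^m, where A_m(s) := #{ ℓ ∈ {1,…,d} : s_ℓ < 2^m − 1 }. -/
open MeasureTheory Finset
open scoped Classical

noncomputable section

/-- The `k`-dispersion of a finite point set `P ⊆ [0,1]^d`: the supremum of the volumes of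
axis-parallel boxes inside `[0,1]^d` containing at most `k` points of `P`. -/
def kdisp (d k : ℕ) (P : Finset (Fin d → ℝ)) : ℝ :=
  sSup { v : ℝ | ∃ a b : Fin d → ℝ,
    (∀ i, 0 ≤ a i ∧ a i ≤ b i ∧ b i ≤ 1) ∧
    (P.filter (fun x => ∀ i, x i ∈ Set.Ioo (a i) (b i))).card ≤ k ∧
    v = ∏ i, (b i - a i) }

/-- The minimal `k`-dispersion over all `n`-point subsets of `[0,1]^d`. -/
def kdispStar (d k n : ℕ) : ℝ :=
  sInf { v : ℝ | ∃ P : Finset (Fin d → ℝ),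
    (∀ x ∈ P, ∀ i, x i ∈ Set.Icc (0:ℝ) 1) ∧ P.card = n ∧ v = kdisp d k P }

/-- `I` is a subinterval of `[0,1]`. -/
def IsIntervalIn01 (I : Set ℝ) : Prop := I ⊆ Set.Icc 0 1 ∧ I.OrdConnected

/-- Membership of the axis-parallel box `∏_ℓ I ℓ` in the family `Ω_m(s,p)`: the box has
volume exceeding `2^{-m}`, and for every coordinate `ℓ` one has
`s ℓ / 2^m < vol(I ℓ) ≤ (s ℓ + 1)/2^m` and `inf (I ℓ) ∈ [p ℓ - 2^{-m}, p ℓ)`. -/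
def memOmega (m : ℕ) {d : ℕ} (s : Fin d → ℕ) (p : Fin d → ℝ) (I : Fin d → Set ℝ) : Prop :=
  (∀ ℓ, IsIntervalIn01 (I ℓ)) ∧
  ((2:ℝ) ^ m)⁻¹ < (volume (Set.pi Set.univ I)).toReal ∧
  ∀ ℓ, (s ℓ : ℝ) / 2 ^ m < (volume (I ℓ)).toReal ∧
    (volume (I ℓ)).toReal ≤ ((s ℓ : ℝ) + 1) / 2 ^ m ∧
    sInf (I ℓ) ∈ Set.Ico (p ℓ - ((2:ℝ) ^ m)⁻¹) (p ℓ)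

/-- `(s,p)` is an admissible index pair, i.e. `(s,p) ∈ 𝕀_m`: the parameters lie in the
allowed ranges and `Ω_m(s,p) ≠ ∅`. -/
def memIm (m : ℕ) {d : ℕ} (s : Fin d → ℕ) (p : Fin d → ℝ) : Prop :=
  (∀ ℓ, s ℓ < 2 ^ m) ∧
  (∀ ℓ, ∃ j : ℕ, 1 ≤ j ∧ j ≤ 2 ^ m - 1 ∧ p ℓ = (j : ℝ) / 2 ^ m) ∧
  ∃ I, memOmega m s p I

/-- Membership of `z` in the box `𝔹_m(s,p) = ∏_ℓ [p ℓ, p ℓ + (s ℓ - 1)/2^m]`. -/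
def memBox (m : ℕ) {d : ℕ} (s : Fin d → ℕ) (p : Fin d → ℝ) (z : Fin d → ℝ) : Prop :=
  ∀ ℓ, z ℓ ∈ Set.Icc (p ℓ) (p ℓ + ((s ℓ : ℝ) - 1) / 2 ^ m)

/-- If `Ω_m(s,p)` is nonempty, then every box `B ∈ Ω_m(s,p)` satisfies
`2^{-m} < vol_d(B) ≤ (1 - 2^{-m})^{A_m(s)}`, and consequently
`A_m(s) ≤ log(2) · m · 2^m`, where `A_m(s) = #{ℓ : s ℓ < 2^m - 1}`. -/
theorem statement_3 (m d : ℕ) (hm : 1 ≤ m) (s : Fin d → ℕ) (p : Fin d → ℝ)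
    (hs : ∀ ℓ, s ℓ < 2 ^ m)
    (hp : ∀ ℓ, ∃ j : ℕ, 1 ≤ j ∧ j ≤ 2 ^ m - 1 ∧ p ℓ = (j : ℝ) / 2 ^ m)
    (hne : ∃ I, memOmega m s p I) :
    (∀ I, memOmega m s p I →
      ((2:ℝ) ^ m)⁻¹ < (volume (Set.pi Set.univ I)).toReal ∧
      (volume (Set.pi Set.univ I)).toReal ≤
        (1 - ((2:ℝ) ^ m)⁻¹) ^ (Finset.univ.filter fun ℓ => s ℓ < 2 ^ m - 1).card) ∧
    ((Finset.univ.filter fun ℓ => s ℓ < 2 ^ m - 1).card : ℝ) ≤ Real.log 2 * m * 2 ^ m := by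
  have h2m : (0:ℝ) < 2 ^ m := by positivity
  have h2m2 : (2:ℝ) ≤ 2 ^ m := by
    calc (2:ℝ) = 2 ^ 1 := by norm_num
    _ ≤ 2 ^ m := by exact pow_le_pow_right₀ (by norm_num) hm
  have hε : (0:ℝ) < ((2:ℝ) ^ m)⁻¹ := by positivity
  have hε2 : ((2:ℝ) ^ m)⁻¹ ≤ 1/2 := by
    rw [inv_le_comm₀ (by positivity) (by norm_num)]
    simpa using h2m2
  have h1ε : (0:ℝ) < 1 - ((2:ℝ) ^ m)⁻¹ := by linarith
  set A := (Finset.univ.filter fun ℓ => s ℓ < 2 ^ m - 1).card with hA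
  have key : ∀ I, memOmega m s p I →
      ((2:ℝ) ^ m)⁻¹ < (volume (Set.pi Set.univ I)).toReal ∧
      (volume (Set.pi Set.univ I)).toReal ≤ (1 - ((2:ℝ) ^ m)⁻¹) ^ A := by
    rintro I ⟨hint, hvol, hc⟩
    refine ⟨hvol, ?_⟩
    have hprod : (volume (Set.pi Set.univ I)).toReal = ∏ ℓ, (volume (I ℓ)).toReal := by
      rw [volume_pi_pi, ENNReal.toReal_prod]
    have hle1 : ∀ ℓ, (volume (I ℓ)).toReal ≤ 1 := by
      intro ℓ
      refine (hc ℓ).2.1.trans ?_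
      rw [div_le_one h2m]
      have : (s ℓ : ℝ) + 1 ≤ 2 ^ m := by exact_mod_cast Nat.succ_le_of_lt (hs ℓ)
      linarith
    have hleε : ∀ ℓ, s ℓ < 2 ^ m - 1 → (volume (I ℓ)).toReal ≤ 1 - ((2:ℝ) ^ m)⁻¹ := by
      intro ℓ hℓ
      refine (hc ℓ).2.1.trans ?_
      have h2 : s ℓ + 1 < 2 ^ m := by
        have := Nat.add_lt_of_lt_sub hℓ
        omega
      have h3 : (s ℓ : ℝ) + 2 ≤ 2 ^ m := by exact_mod_cast h2
      rw [div_le_iff₀ h2m]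
      have h4 : (1 - ((2:ℝ) ^ m)⁻¹) * 2 ^ m = 2 ^ m - 1 := by
        field_simp
      linarith
    rw [hprod]
    have hsplit := Finset.prod_filter_mul_prod_filter_not Finset.univ
      (fun ℓ => s ℓ < 2 ^ m - 1) (fun ℓ => (volume (I ℓ)).toReal)
    rw [← hsplit]
    have hb1 : (∏ ℓ ∈ Finset.univ.filter fun ℓ => s ℓ < 2 ^ m - 1,
        (volume (I ℓ)).toReal) ≤ (1 - ((2:ℝ) ^ m)⁻¹) ^ A := by
      rw [hA, ← Finset.prod_const]
      exact Finset.prod_le_prod (fun ℓ _ => ENNReal.toReal_nonneg)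
        (fun ℓ hℓ => hleε ℓ (by simpa using hℓ))
    have hb2 : (∏ ℓ ∈ Finset.univ.filter fun ℓ => ¬ s ℓ < 2 ^ m - 1,
        (volume (I ℓ)).toReal) ≤ 1 :=
      Finset.prod_le_one (fun ℓ _ => ENNReal.toReal_nonneg) (fun ℓ _ => hle1 ℓ)
    have hb1nn : (0:ℝ) ≤ ∏ ℓ ∈ Finset.univ.filter fun ℓ => s ℓ < 2 ^ m - 1,
        (volume (I ℓ)).toReal :=
      Finset.prod_nonneg fun ℓ _ => ENNReal.toReal_nonneg
    calc (∏ ℓ ∈ Finset.univ.filter fun ℓ => s ℓ < 2 ^ m - 1, (volume (I ℓ)).toReal) *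
          ∏ ℓ ∈ Finset.univ.filter fun ℓ => ¬ s ℓ < 2 ^ m - 1, (volume (I ℓ)).toReal
        ≤ (∏ ℓ ∈ Finset.univ.filter fun ℓ => s ℓ < 2 ^ m - 1, (volume (I ℓ)).toReal) * 1 :=
          mul_le_mul_of_nonneg_left hb2 hb1nn
      _ = ∏ ℓ ∈ Finset.univ.filter fun ℓ => s ℓ < 2 ^ m - 1, (volume (I ℓ)).toReal :=
          mul_one _
      _ ≤ (1 - ((2:ℝ) ^ m)⁻¹) ^ A := hb1
  refine ⟨key, ?_⟩
  obtain ⟨I, hI⟩ := hne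
  obtain ⟨hlo, hhi⟩ := key I hI
  have hlt : ((2:ℝ) ^ m)⁻¹ < (1 - ((2:ℝ) ^ m)⁻¹) ^ A := lt_of_lt_of_le hlo hhi
  have hlog := Real.log_lt_log hε hlt
  rw [Real.log_inv, Real.log_pow] at hlog
  have hlogle : Real.log (1 - ((2:ℝ) ^ m)⁻¹) ≤ -((2:ℝ) ^ m)⁻¹ := by
    have := Real.log_le_sub_one_of_pos h1ε
    linarith
  have hmul : (A:ℝ) * Real.log (1 - ((2:ℝ) ^ m)⁻¹) ≤ (A:ℝ) * (-((2:ℝ) ^ m)⁻¹) :=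
    mul_le_mul_of_nonneg_left hlogle (Nat.cast_nonneg A)
  rw [Real.log_pow] at hlog
  have hAε : (A:ℝ) * ((2:ℝ) ^ m)⁻¹ < m * Real.log 2 := by
    linarith
  have hfin := mul_lt_mul_of_pos_right hAε h2m
  have hcancel : ((2:ℝ) ^ m)⁻¹ * 2 ^ m = 1 := inv_mul_cancel₀ (ne_of_gt h2m)
  nlinarith [hfin, hcancel]
end
end

section
/- For every m ∈ ℕ and every dimension d, the index set 𝕀_m := { (s,p) : Ω_m(s,p) ≠ ∅ } satisfies #𝕀_m ≤ exp( m · 2^m · log(2^{m+3} d) ). -/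
open MeasureTheory Finset
open scoped Classical

noncomputable section

/-!
For `(s, j) ∈ 𝕀_m` write `N = 2^m`. A box of `Ω_m(s, p)` fits in `[0,1]`, so `j ℓ + s ℓ ≤ N`, and
its volume `> 1/N` together with `log x ≤ x - 1` gives `∑ ℓ (N - 1 - s ℓ) ≤ N log N ≤ m N`. Splitting
each `N - 1 - s ℓ` as `(N - s ℓ - j ℓ) + (j ℓ - 1)` injects `𝕀_m` into the `2d`-tuples of naturals
with sum at most `m N`, of which there are `C(2d + mN, mN) ≤ (e (2d + mN) / mN)^{mN} ≤ (16 d)^{mN}`.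
-/

theorem finite_setOf_sum_le {α : Type*} [Fintype α] (B : ℕ) :
    {f : α → ℕ | ∑ a, f a ≤ B}.Finite :=
  (Set.Finite.pi fun _ => Set.finite_Iic B).subset fun _ hf a _ =>
    (Finset.single_le_sum (fun _ _ => Nat.zero_le _) (Finset.mem_univ a)).trans hf

/-- Stars and bars, with a slack coordinate absorbing `B - ∑ a, f a`. -/
theorem ncard_setOf_sum_le_le_choose (α : Type*) [Fintype α] (B : ℕ) :
    {f : α → ℕ | ∑ a, f a ≤ B}.ncard ≤ (Fintype.card α + B).choose B := by
  let withSlack : {f : α → ℕ | ∑ a, f a ≤ B} → {g : Option α → ℕ // ∑ o, g o = B} :=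
    fun f => ⟨fun o => o.elim (B - ∑ a, f.1 a) f.1, by
      have := f.2
      simp only [Set.mem_ofPred_eq] at this
      simp only [Fintype.sum_option, Option.elim_none, Option.elim_some]
      omega⟩
  have hinj : Function.Injective withSlack := fun f g h =>
    Subtype.ext (funext fun a => congrFun (congrArg Subtype.val h) (some a))
  have : Finite {g : Option α → ℕ // ∑ o, g o = B} :=
    Finite.of_equiv _ (Sym.equivNatSumOfFintype (Option α) B)
  calc _ = Nat.card {f : α → ℕ | ∑ a, f a ≤ B} := (Nat.card_coe_set_eq _).symm
    _ ≤ Nat.card {g : Option α → ℕ // ∑ o, g o = B} := Nat.card_le_card_of_injective _ hinj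
    _ = Nat.card (Sym (Option α) B) := Nat.card_congr (Sym.equivNatSumOfFintype _ _).symm
    _ = _ := by
      rw [Nat.card_eq_fintype_card, Sym.card_sym_eq_choose, Fintype.card_option]
      congr 1
      omega

/-- Each pair `(s, j)` is encoded by the two parts `N - s i - j i` and `j i - 1` of `N - 1 - s i`. -/
theorem ncard_le_choose_of_forall {ι : Type*} [Fintype ι] {N B : ℕ}
    (S : Set ((ι → ℕ) × (ι → ℕ)))
    (hS : ∀ sj ∈ S, (∀ i, 1 ≤ sj.2 i ∧ sj.2 i + sj.1 i ≤ N) ∧ ∑ i, (N - 1 - sj.1 i) ≤ B) :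
    S.ncard ≤ (2 * Fintype.card ι + B).choose B := by
  let encode : (ι → ℕ) × (ι → ℕ) → ι × Bool → ℕ := fun sj ib =>
    if ib.2 then N - sj.1 ib.1 - sj.2 ib.1 else sj.2 ib.1 - 1
  have hmaps : ∀ sj ∈ S, encode sj ∈ {f : ι × Bool → ℕ | ∑ a, f a ≤ B} := by
    intro sj hsj
    obtain ⟨hrange, hsum⟩ := hS sj hsj
    simp only [Set.mem_ofPred_eq, Fintype.sum_prod_type, Fintype.sum_bool, encode,
      if_true, Bool.false_eq_true, if_false]
    refine le_of_eq_of_le (Finset.sum_congr rfl fun i _ => ?_) hsum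
    have := hrange i
    omega
  have hinj : Set.InjOn encode S := by
    intro x hx y hy hxy
    have hcoord : ∀ i, x.1 i = y.1 i ∧ x.2 i = y.2 i := by
      intro i
      have ht := congrFun hxy (i, true)
      have hf := congrFun hxy (i, false)
      simp only [encode, if_true, Bool.false_eq_true, if_false] at ht hf
      have := (hS x hx).1 i
      have := (hS y hy).1 i
      omega
    exact Prod.ext (funext fun i => (hcoord i).1) (funext fun i => (hcoord i).2)
  calc S.ncard ≤ {f : ι × Bool → ℕ | ∑ a, f a ≤ B}.ncard :=
        Set.ncard_le_ncard_of_injOn encode hmaps hinj (finite_setOf_sum_le B)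
    _ ≤ _ := by
      simpa [Fintype.card_prod, mul_comm] using ncard_setOf_sum_le_le_choose (ι × Bool) B

theorem choose_le_exp_one_mul_div_pow (n k : ℕ) :
    (n.choose k : ℝ) ≤ (Real.exp 1 * n / k) ^ k := by
  rcases k.eq_zero_or_pos with rfl | hk
  · simp
  have hkk : (0 : ℝ) < (k : ℝ) ^ k := by positivity
  have hfac : (k : ℝ) ^ k / k.factorial ≤ Real.exp 1 ^ k := by
    simpa [← Real.exp_nat_mul] using Real.pow_div_factorial_le_exp (x := k) (Nat.cast_nonneg k) k
  calc (n.choose k : ℝ) ≤ (n : ℝ) ^ k / k.factorial := Nat.choose_le_pow_div k n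
    _ = (n : ℝ) ^ k / (k : ℝ) ^ k * ((k : ℝ) ^ k / k.factorial) := by field_simp
    _ ≤ (n : ℝ) ^ k / (k : ℝ) ^ k * Real.exp 1 ^ k := by gcongr
    _ = (Real.exp 1 * n / k) ^ k := by rw [div_pow, mul_pow]; ring

theorem choose_two_mul_add_le_pow {d B : ℕ} (hd : 1 ≤ d) (hB : 1 ≤ B) :
    ((2 * d + B).choose B : ℝ) ≤ (16 * d) ^ B := by
  have hd' : (1 : ℝ) ≤ d := by exact_mod_cast hd
  have hB' : (1 : ℝ) ≤ B := by exact_mod_cast hB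
  have he : Real.exp 1 < 3 := Real.exp_one_lt_d9.trans (by norm_num)
  refine (choose_le_exp_one_mul_div_pow _ _).trans (pow_le_pow_left₀ (by positivity) ?_ B)
  rw [div_le_iff₀ (by positivity)]
  push_cast
  nlinarith [Real.exp_pos 1, mul_nonneg (sub_nonneg.2 hd') (sub_nonneg.2 hB')]

theorem sInf_add_volume_toReal_le_one {I : Set ℝ} (hI : I ⊆ Set.Icc 0 1) :
    sInf I + (volume I).toReal ≤ 1 := by
  rcases I.eq_empty_or_nonempty with rfl | hne
  · simp
  have hbdd : BddBelow I := ⟨0, fun x hx => (hI hx).1⟩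
  have hInf_le : sInf I ≤ 1 := (csInf_le hbdd hne.some_mem).trans (hI hne.some_mem).2
  have hsub : I ⊆ Set.Icc (sInf I) 1 := fun x hx => ⟨csInf_le hbdd hx, (hI hx).2⟩
  have hvol : (volume I).toReal ≤ 1 - sInf I := by
    have hmono := measure_mono (μ := volume) hsub
    rw [Real.volume_Icc] at hmono
    simpa [hInf_le] using ENNReal.toReal_mono ENNReal.ofReal_ne_top hmono
  linarith

theorem sum_one_sub_lt_neg_log {ι : Type*} (t : Finset ι) {x : ι → ℝ} {c : ℝ} (hc : 0 < c)
    (hx : ∀ i ∈ t, 0 < x i) (h : c < ∏ i ∈ t, x i) :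
    ∑ i ∈ t, (1 - x i) < -Real.log c := by
  have hlog : Real.log c < ∑ i ∈ t, Real.log (x i) := by
    rw [← Real.log_prod fun i hi => (hx i hi).ne']
    exact Real.log_lt_log hc h
  have hsum : ∑ i ∈ t, Real.log (x i) ≤ ∑ i ∈ t, (x i - 1) :=
    Finset.sum_le_sum fun i hi => Real.log_le_sub_one_of_pos (hx i hi)
  simp only [Finset.sum_sub_distrib] at hsum ⊢
  linarith

namespace memOmega

variable {m d : ℕ} {s : Fin d → ℕ} {I : Fin d → Set ℝ}

theorem add_le {j : Fin d → ℕ} (h : memOmega m s (fun ℓ => (j ℓ : ℝ) / 2 ^ m) I) (ℓ : Fin d) :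
    j ℓ + s ℓ ≤ 2 ^ m := by
  obtain ⟨hint, -, hco⟩ := h
  obtain ⟨hs, -, hinf, -⟩ := hco ℓ
  have hle := sInf_add_volume_toReal_le_one (hint ℓ).1
  have hpos : (0 : ℝ) < 2 ^ m := by positivity
  have hlt : (j ℓ : ℝ) + s ℓ < 2 ^ m + 1 := by
    rw [div_lt_iff₀ hpos] at hs
    rw [sub_le_iff_le_add, div_le_iff₀ hpos] at hinf
    nlinarith [inv_mul_cancel₀ hpos.ne']
  have : j ℓ + s ℓ < 2 ^ m + 1 := by exact_mod_cast hlt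
  omega

theorem sum_sub_le {p : Fin d → ℝ} (h : memOmega m s p I) (hs : ∀ ℓ, s ℓ < 2 ^ m) :
    ∑ ℓ, (2 ^ m - 1 - s ℓ) ≤ m * 2 ^ m := by
  obtain ⟨-, hvol, hco⟩ := h
  have hpos : (0 : ℝ) < 2 ^ m := by positivity
  have hxpos : ∀ ℓ ∈ Finset.univ, 0 < (volume (I ℓ)).toReal := fun ℓ _ =>
    lt_of_le_of_lt (by positivity) (hco ℓ).1
  rw [volume_pi_pi, ENNReal.toReal_prod] at hvol
  have hlog := sum_one_sub_lt_neg_log Finset.univ (by positivity) hxpos hvol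
  rw [Real.log_inv, Real.log_pow, neg_neg] at hlog
  have hreal : ∑ ℓ, (1 - ((s ℓ : ℝ) + 1) / 2 ^ m) ≤ m :=
    calc ∑ ℓ, (1 - ((s ℓ : ℝ) + 1) / 2 ^ m) ≤ ∑ ℓ, (1 - (volume (I ℓ)).toReal) :=
          Finset.sum_le_sum fun ℓ _ => by linarith [(hco ℓ).2.1]
      _ ≤ m * Real.log 2 := hlog.le
      _ ≤ m := mul_le_of_le_one_right (Nat.cast_nonneg m)
          (Real.log_two_lt_d9.le.trans (by norm_num))
  have hcast : ∀ ℓ, ((2 ^ m - 1 - s ℓ : ℕ) : ℝ) = 2 ^ m * (1 - ((s ℓ : ℝ) + 1) / 2 ^ m) := by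
    intro ℓ
    have hle : 1 + s ℓ ≤ 2 ^ m := by have := hs ℓ; omega
    rw [Nat.sub_sub, Nat.cast_sub hle, mul_sub, mul_div_cancel₀ _ hpos.ne']
    push_cast
    ring
  have : ((∑ ℓ, (2 ^ m - 1 - s ℓ) : ℕ) : ℝ) ≤ ((m * 2 ^ m : ℕ) : ℝ) := by
    push_cast [Nat.cast_sum, hcast, ← Finset.mul_sum]
    nlinarith
  exact_mod_cast this

end memOmega

/-- The index set `𝕀_m = {(s,p) : Ω_m(s,p) ≠ ∅}` (with `p` encoded by the integer vector
`j`, `p ℓ = j ℓ / 2^m`) satisfies `#𝕀_m ≤ exp(m · 2^m · log(2^{m+3} d))`. -/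
theorem statement_4 (m d : ℕ) (hm : 1 ≤ m) (hd : 1 ≤ d) :
    ((Set.ncard { sj : (Fin d → ℕ) × (Fin d → ℕ) |
        (∀ ℓ, sj.1 ℓ < 2 ^ m) ∧ (∀ ℓ, 1 ≤ sj.2 ℓ ∧ sj.2 ℓ ≤ 2 ^ m - 1) ∧
        ∃ I, memOmega m sj.1 (fun ℓ => (sj.2 ℓ : ℝ) / 2 ^ m) I } : ℕ) : ℝ)
      ≤ Real.exp (m * 2 ^ m * Real.log (2 ^ (m + 3) * d)) := by
  have hB : 1 ≤ m * 2 ^ m := Nat.one_le_iff_ne_zero.2 (by positivity)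
  have h16 : (16 : ℝ) * d ≤ 2 ^ (m + 3) * d := by
    gcongr
    calc (16 : ℝ) = 2 ^ (1 + 3) := by norm_num
      _ ≤ 2 ^ (m + 3) := pow_le_pow_right₀ one_le_two (by omega)
  calc _ ≤ ((2 * d + m * 2 ^ m).choose (m * 2 ^ m) : ℝ) := by
        refine Nat.cast_le.2 ((ncard_le_choose_of_forall (N := 2 ^ m) _ ?_).trans_eq
          (by rw [Fintype.card_fin]))
        rintro ⟨s, j⟩ ⟨hs, hj, I, hI⟩
        exact ⟨fun ℓ => ⟨(hj ℓ).1, hI.add_le ℓ⟩, hI.sum_sub_le hs⟩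
    _ ≤ (16 * d) ^ (m * 2 ^ m) := choose_two_mul_add_le_pow hd hB
    _ ≤ (2 ^ (m + 3) * d) ^ (m * 2 ^ m) := by gcongr
    _ = _ := by
      rw [← Real.exp_log (by positivity : (0 : ℝ) < 2 ^ (m + 3) * d), ← Real.exp_nat_mul,
        Real.log_exp]
      push_cast
      ring_nf
end
end

section
/- For every k ∈ ℕ and every d ∈ ℕ, the minimal k-dispersion with n = k + ⌈log₂ d⌉ points satisfies k-disp*( k + ⌈log₂ d⌉ , d ) ≥ 1/4. -/
open MeasureTheory Finset
open scoped Classical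

noncomputable section

lemma kdisp_bddAbove (d k : ℕ) (P : Finset (Fin d → ℝ)) :
    BddAbove { v : ℝ | ∃ a b : Fin d → ℝ,
      (∀ i, 0 ≤ a i ∧ a i ≤ b i ∧ b i ≤ 1) ∧
      (P.filter (fun x => ∀ i, x i ∈ Set.Ioo (a i) (b i))).card ≤ k ∧
      v = ∏ i, (b i - a i) } := by
  refine ⟨1, ?_⟩
  rintro v ⟨a, b, hab, -, rfl⟩
  calc ∏ i, (b i - a i) ≤ ∏ i, (1:ℝ) := by
        apply Finset.prod_le_prod
        · intro i _; linarith [(hab i).1, (hab i).2.1]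
        · intro i _; linarith [(hab i).1, (hab i).2.2]
    _ = 1 := by simp

/-- If there are `i ≠ j` and booleans `s t` such that no point of a subset `Q` of `P`
has sign pattern `(s,t)` in coordinates `(i,j)`, and `P` has at most `k` points outside `Q`,
then the `k`-dispersion of `P` is at least `1/4`. -/
lemma quarter_le_kdisp (d k : ℕ) (P Q : Finset (Fin d → ℝ)) (hQP : Q ⊆ P)
    (hcard : P.card ≤ k + Q.card)
    (i j : Fin d) (hij : i ≠ j) (s t : Bool)
    (h : ∀ p ∈ Q, ¬ (decide ((1:ℝ)/2 < p i) = s ∧ decide ((1:ℝ)/2 < p j) = t)) :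
    (1:ℝ)/4 ≤ kdisp d k P := by
  set a : Fin d → ℝ := fun u =>
    if u = i then (if s then 1/2 else 0) else if u = j then (if t then 1/2 else 0) else 0 with ha
  set b : Fin d → ℝ := fun u =>
    if u = i then (if s then 1/2 else 0) + 1/2 else
      if u = j then (if t then 1/2 else 0) + 1/2 else 1 with hb
  have hbounds : ∀ u, 0 ≤ a u ∧ a u ≤ b u ∧ b u ≤ 1 := by
    intro u
    simp only [ha, hb]
    split_ifs <;> norm_num
  have hai : a i = (if s then (1:ℝ)/2 else 0) := by simp [ha]
  have hbi : b i = (if s then (1:ℝ)/2 else 0) + 1/2 := by simp [hb]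
  have haj : a j = (if t then (1:ℝ)/2 else 0) := by simp [ha, Ne.symm hij]
  have hbj : b j = (if t then (1:ℝ)/2 else 0) + 1/2 := by simp [hb, Ne.symm hij]
  have hsub : P.filter (fun x => ∀ u, x u ∈ Set.Ioo (a u) (b u)) ⊆ P \ Q := by
    intro x hx
    rw [mem_filter] at hx
    rw [mem_sdiff]
    refine ⟨hx.1, fun hxQ => h x hxQ ⟨?_, ?_⟩⟩
    · have hxi := hx.2 i
      rw [hai, hbi] at hxi
      cases s with
      | true => simp only [if_true] at hxi; exact decide_eq_true hxi.1
      | false =>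
          rw [if_neg (by simp)] at hxi
          refine decide_eq_false ?_
          have := hxi.2; intro hlt; linarith
    · have hxj := hx.2 j
      rw [haj, hbj] at hxj
      cases t with
      | true => simp only [if_true] at hxj; exact decide_eq_true hxj.1
      | false =>
          rw [if_neg (by simp)] at hxj
          refine decide_eq_false ?_
          have := hxj.2; intro hlt; linarith
  have hcardle : (P.filter (fun x => ∀ u, x u ∈ Set.Ioo (a u) (b u))).card ≤ k := by
    have h1 := Finset.card_le_card hsub
    rw [Finset.card_sdiff_of_subset hQP] at h1
    exact le_trans h1 (Nat.sub_le_iff_le_add.mpr hcard)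
  have hprod : ∏ u, (b u - a u) = 1/4 := by
    have h1 : ∀ u, b u - a u = if u = i then (1:ℝ)/2 else if u = j then 1/2 else 1 := by
      intro u
      simp only [ha, hb]
      split_ifs <;> ring
    have h2 : ∏ u, (b u - a u) = ∏ u ∈ ({i, j} : Finset (Fin d)), (b u - a u) := by
      refine (Finset.prod_subset (Finset.subset_univ _) ?_).symm
      intro u _ hu
      simp only [Finset.mem_insert, Finset.mem_singleton, not_or] at hu
      rw [h1 u, if_neg hu.1, if_neg hu.2]
    rw [h2, Finset.prod_pair hij, h1 i, h1 j, if_pos rfl, if_neg (Ne.symm hij), if_pos rfl]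
    norm_num
  have hmem : (1:ℝ)/4 ∈ { v : ℝ | ∃ a b : Fin d → ℝ,
      (∀ u, 0 ≤ a u ∧ a u ≤ b u ∧ b u ≤ 1) ∧
      (P.filter (fun x => ∀ u, x u ∈ Set.Ioo (a u) (b u))).card ≤ k ∧
      v = ∏ u, (b u - a u) } := ⟨a, b, hbounds, hcardle, hprod.symm⟩
  exact le_csSup (kdisp_bddAbove d k P) hmem

lemma main_lemma (k d : ℕ) (hk : 1 ≤ k) (hd : 1 ≤ d) (P : Finset (Fin d → ℝ))
    (hP : P.card = k + Nat.clog 2 d) : (1:ℝ)/4 ≤ kdisp d k P := by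
  rcases eq_or_lt_of_le hd with h1 | h2
  · -- d = 1 : the whole cube works
    have hclog : Nat.clog 2 d = 0 := by rw [← h1]; exact Nat.clog_one_right 2
    have hmem : (1:ℝ) ∈ { v : ℝ | ∃ a b : Fin d → ℝ,
        (∀ u, 0 ≤ a u ∧ a u ≤ b u ∧ b u ≤ 1) ∧
        (P.filter (fun x => ∀ u, x u ∈ Set.Ioo (a u) (b u))).card ≤ k ∧
        v = ∏ u, (b u - a u) } := by
      refine ⟨fun _ => 0, fun _ => 1, by norm_num, ?_, by simp⟩
      exact le_trans (Finset.card_filter_le _ _) (by omega)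
    have := le_csSup (kdisp_bddAbove d k P) hmem
    calc (1:ℝ)/4 ≤ 1 := by norm_num
      _ ≤ kdisp d k P := this
  · -- 2 ≤ d
    have hm : 1 ≤ Nat.clog 2 d := Nat.clog_pos (by norm_num) h2
    obtain ⟨Q, hQP, hQcard⟩ := Finset.exists_subset_card_eq
      (show Nat.clog 2 d ≤ P.card by omega)
    have hQne : Q.Nonempty := Finset.card_pos.mp (by omega)
    obtain ⟨p₀, hp₀⟩ := hQne
    have hRcard : (Q.erase p₀).card = Nat.clog 2 d - 1 := by
      rw [Finset.card_erase_of_mem hp₀, hQcard]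
    have hcardlt : Fintype.card (↥(Q.erase p₀) → Bool) < Fintype.card (Fin d) := by
      rw [Fintype.card_fun, Fintype.card_coe, hRcard, Fintype.card_fin, Fintype.card_bool]
      exact Nat.pow_pred_clog_lt_self (by norm_num) h2
    obtain ⟨i, j, hij, hFij⟩ := Fintype.exists_ne_map_eq_of_card_lt
      (fun (i : Fin d) => fun (p : ↥(Q.erase p₀)) =>
        (decide ((1:ℝ)/2 < (p : Fin d → ℝ) i) == decide ((1:ℝ)/2 < p₀ i))) hcardlt
    have key : ∀ p ∈ Q,
        (decide ((1:ℝ)/2 < p i) == decide ((1:ℝ)/2 < p₀ i)) =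
        (decide ((1:ℝ)/2 < p j) == decide ((1:ℝ)/2 < p₀ j)) := by
      intro p hp
      by_cases hpp : p = p₀
      · subst hpp; simp
      · exact congrFun hFij ⟨p, Finset.mem_erase.mpr ⟨hpp, hp⟩⟩
    have hPQ : P.card ≤ k + Q.card := by omega
    by_cases hc : decide ((1:ℝ)/2 < p₀ i) = decide ((1:ℝ)/2 < p₀ j)
    · -- patterns equal: forbidden combination (false, true)
      refine quarter_le_kdisp d k P Q hQP hPQ i j hij false true ?_
      rintro p hp ⟨hp1, hp2⟩
      have hkey := key p hp
      rw [hp1, hp2, hc] at hkey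
      cases hcj : decide ((1:ℝ)/2 < p₀ j) <;> rw [hcj] at hkey <;> simp at hkey
    · -- patterns complementary: forbidden combination (true, true)
      refine quarter_le_kdisp d k P Q hQP hPQ i j hij true true ?_
      rintro p hp ⟨hp1, hp2⟩
      have hkey := key p hp
      rw [hp1, hp2] at hkey
      apply hc
      cases hci : decide ((1:ℝ)/2 < p₀ i) <;> cases hcj : decide ((1:ℝ)/2 < p₀ j) <;>
        rw [hci, hcj] at hkey <;> simp_all

/-- For every `k ∈ ℕ` and every `d ∈ ℕ`, the minimal `k`-dispersion with
`n = k + ⌈log₂ d⌉` points satisfies `k-disp*(k + ⌈log₂ d⌉, d) ≥ 1/4`. -/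
theorem statement_11 (k d : ℕ) (hk : 1 ≤ k) (hd : 1 ≤ d) :
    kdispStar d k (k + Nat.clog 2 d) ≥ 1 / 4 := by
  set n := k + Nat.clog 2 d with hn
  have hnpos : 0 < n := by omega
  rw [ge_iff_le, kdispStar]
  apply le_csInf
  · -- the set is nonempty: exhibit an n-point set in the cube
    set P : Finset (Fin d → ℝ) :=
      (Finset.range n).image (fun m : ℕ => fun _ : Fin d => (m : ℝ) / n) with hPdef
    refine ⟨kdisp d k P, P, ?_, ?_, rfl⟩
    · intro x hx u
      simp only [hPdef, Finset.mem_image, Finset.mem_range] at hx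
      obtain ⟨m, hm, rfl⟩ := hx
      constructor
      · exact div_nonneg (Nat.cast_nonneg m) (Nat.cast_nonneg n)
      · rw [div_le_one (by exact_mod_cast hnpos)]
        exact_mod_cast hm.le
    · rw [hPdef, Finset.card_image_of_injOn, Finset.card_range]
      intro m1 hm1 m2 hm2 he
      have := congrFun he ⟨0, hd⟩
      field_simp at this
      exact_mod_cast this
  · rintro v ⟨P, hPb, hPcard, rfl⟩
    have := main_lemma k d hk hd P hPcard
    linarith
end
end

section
/- Let P = {x₁,…,x_n} ⊂ [0,1]^d be a point set and define the binary matrix A ∈ {0,1}^{n×d} by A_{i,j} = 1 if x_{i,j} ≥ 1/2 and A_{i,j} = 0 otherwise. If there exist two distinct column indices j₁ ≠ j₂ such that the columns A_{·,j₁} and A_{·,j₂} agree in all but at most k entries, or disagree in all but at most k entries, then there exists an axis-parallel box B ⊂ [0,1]^d with vol_d(B) = 1/4 containing at most k points of P; hence k-disp(P,d) ≥ 1/4. -/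
open MeasureTheory Finset
open scoped Classical

noncomputable section

lemma kdisp_ge_aux (d k : ℕ) (P : Finset (Fin d → ℝ)) (a b : Fin d → ℝ)
    (hab : ∀ i, 0 ≤ a i ∧ a i ≤ b i ∧ b i ≤ 1)
    (hcard : (P.filter (fun x => ∀ i, x i ∈ Set.Ioo (a i) (b i))).card ≤ k) :
    (∏ i, (b i - a i)) ≤ kdisp d k P := by
  apply le_csSup
  · refine ⟨1, ?_⟩
    rintro v ⟨a', b', hab', _, rfl⟩
    apply Finset.prod_le_one
    · intro i _; linarith [(hab' i).1, (hab' i).2.1, (hab' i).2.2]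
    · intro i _; linarith [(hab' i).1, (hab' i).2.1, (hab' i).2.2]
  · exact ⟨a, b, hab, hcard, rfl⟩

/-- Let `P = {x₁,…,xₙ} ⊆ [0,1]^d` and let `A` be the binary matrix with `A i j = 1` iff
`x i j ≥ 1/2`. If two distinct columns of `A` agree in all but at most `k` entries, or
disagree in all but at most `k` entries, then there is an axis-parallel box of volume `1/4`
containing at most `k` of the points; hence `k-disp(P,d) ≥ 1/4`. -/
theorem statement_14 (n k d : ℕ) (x : Fin n → Fin d → ℝ)
    (hx : ∀ i ℓ, x i ℓ ∈ Set.Icc (0:ℝ) 1)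
    (h : ∃ j₁ j₂ : Fin d, j₁ ≠ j₂ ∧
      ((Finset.univ.filter fun i => ¬((1 / 2 ≤ x i j₁) ↔ (1 / 2 ≤ x i j₂))).card ≤ k ∨
       (Finset.univ.filter fun i => ((1 / 2 ≤ x i j₁) ↔ (1 / 2 ≤ x i j₂))).card ≤ k)) :
    (∃ a b : Fin d → ℝ, (∀ ℓ, 0 ≤ a ℓ ∧ a ℓ ≤ b ℓ ∧ b ℓ ≤ 1) ∧
      (∏ ℓ, (b ℓ - a ℓ)) = 1 / 4 ∧
      (Finset.univ.filter fun i => ∀ ℓ, x i ℓ ∈ Set.Ioo (a ℓ) (b ℓ)).card ≤ k) ∧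
    1 / 4 ≤ kdisp d k (Finset.image x Finset.univ) := by
  obtain ⟨j₁, j₂, hne, hcase⟩ := h
  have key : ∃ a b : Fin d → ℝ, (∀ ℓ, 0 ≤ a ℓ ∧ a ℓ ≤ b ℓ ∧ b ℓ ≤ 1) ∧
      (∏ ℓ, (b ℓ - a ℓ)) = 1 / 4 ∧
      (Finset.univ.filter fun i => ∀ ℓ, x i ℓ ∈ Set.Ioo (a ℓ) (b ℓ)).card ≤ k := by
    rcases hcase with hc | hc
    · refine ⟨fun ℓ => if ℓ = j₂ then 1/2 else 0,
        fun ℓ => if ℓ = j₁ then 1/2 else 1, ?_, ?_, ?_⟩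
      · intro ℓ
        rcases eq_or_ne ℓ j₁ with rfl | h1 <;> rcases eq_or_ne ℓ j₂ with rfl | h2 <;>
          simp_all <;> norm_num
      · have hsub : ({j₁, j₂} : Finset (Fin d)) ⊆ Finset.univ := Finset.subset_univ _
        rw [← Finset.prod_subset hsub (by
          intro ℓ _ hℓ
          simp only [Finset.mem_insert, Finset.mem_singleton, not_or] at hℓ
          simp [hℓ.1, hℓ.2])]
        rw [Finset.prod_pair hne]
        simp [hne, hne.symm]
        norm_num
      · refine le_trans (Finset.card_le_card ?_) hc
        intro i hi
        simp only [Finset.mem_filter, Finset.mem_univ, true_and] at hi ⊢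
        have h1 := hi j₁
        have h2 := hi j₂
        simp [hne, hne.symm] at h1 h2
        intro hiff
        have := hiff.mpr (by linarith)
        linarith
    · refine ⟨fun ℓ => if ℓ = j₁ ∨ ℓ = j₂ then 1/2 else 0, fun _ => 1, ?_, ?_, ?_⟩
      · intro ℓ; dsimp only; split_ifs <;> norm_num
      · have hsub : ({j₁, j₂} : Finset (Fin d)) ⊆ Finset.univ := Finset.subset_univ _
        rw [← Finset.prod_subset hsub (by
          intro ℓ _ hℓ
          simp only [Finset.mem_insert, Finset.mem_singleton, not_or] at hℓ
          simp [hℓ.1, hℓ.2])]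
        rw [Finset.prod_pair hne]
        simp
        norm_num
      · refine le_trans (Finset.card_le_card ?_) hc
        intro i hi
        simp only [Finset.mem_filter, Finset.mem_univ, true_and] at hi ⊢
        have h1 := hi j₁
        have h2 := hi j₂
        simp at h1 h2
        constructor <;> intro <;> linarith [h1.1, h2.1]
  refine ⟨key, ?_⟩
  obtain ⟨a, b, hab, hprod, hcard⟩ := key
  have hcard' : ((Finset.image x Finset.univ).filter
      (fun y => ∀ ℓ, y ℓ ∈ Set.Ioo (a ℓ) (b ℓ))).card ≤ k := by
    have hsub : ((Finset.image x Finset.univ).filter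
        (fun y => ∀ ℓ, y ℓ ∈ Set.Ioo (a ℓ) (b ℓ))) ⊆
        Finset.image x (Finset.univ.filter (fun i => ∀ ℓ, x i ℓ ∈ Set.Ioo (a ℓ) (b ℓ))) := by
      intro y hy
      simp only [Finset.mem_filter, Finset.mem_image, Finset.mem_univ, true_and] at hy
      obtain ⟨⟨i, rfl⟩, hy2⟩ := hy
      exact Finset.mem_image_of_mem x (by simpa [Set.mem_Ioo] using hy2)
    exact le_trans (Finset.card_le_card hsub) (le_trans Finset.card_image_le hcard)
  calc (1:ℝ)/4 = ∏ ℓ, (b ℓ - a ℓ) := hprod.symm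
    _ ≤ _ := kdisp_ge_aux d k _ a b hab hcard'
end
end

section
/- For every d ∈ ℕ with d ≥ 2, the minimal (classical) dispersion with n = ⌈log₂ d⌉ points satisfies 0-disp*( ⌈log₂ d⌉ , d ) ≥ 1/4; that is, for every point set P ⊂ [0,1]^d with #P = ⌈log₂ d⌉ there exists an axis-parallel box B ⊂ [0,1]^d with vol_d(B) ≥ 1/4 containing no point of P. -/
open MeasureTheory Finset
open scoped Classical

noncomputable section

lemma prod_half_half {d : ℕ} {i i' : Fin d} (hne : i ≠ i') (v : Fin d → ℝ)
    (hi : v i = 1/2) (hi' : v i' = 1/2) (ho : ∀ k, k ≠ i → k ≠ i' → v k = 1) :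
    ∏ k, v k = 1/4 := by
  rw [← Finset.prod_subset (Finset.subset_univ ({i, i'} : Finset (Fin d)))
    (fun k _ hk => by
      simp only [mem_insert, mem_singleton, not_or] at hk
      exact ho k hk.1 hk.2)]
  rw [Finset.prod_pair hne, hi, hi']
  norm_num

lemma box_exists (d : ℕ) (hd : 2 ≤ d) (P : Finset (Fin d → ℝ))
    (hcard : P.card = Nat.clog 2 d) :
    ∃ a b : Fin d → ℝ, (∀ i, 0 ≤ a i ∧ a i ≤ b i ∧ b i ≤ 1) ∧
      1 / 4 ≤ ∏ i, (b i - a i) ∧ ∀ x ∈ P, ¬(∀ i, x i ∈ Set.Ioo (a i) (b i)) := by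
  have hn : 0 < Nat.clog 2 d := Nat.clog_pos one_lt_two hd
  have hPne : P.Nonempty := Finset.card_pos.mp (by rw [hcard]; exact hn)
  obtain ⟨p0, hp0⟩ := hPne
  set g : Fin d → (Fin d → ℝ) → Bool := fun i x => decide ((1:ℝ)/2 ≤ x i) with hg
  set M : Fin d → ({x // x ∈ P.erase p0} → Bool) :=
    fun i x => (g i x.1 == g i p0) with hM
  have hlt : Fintype.card ({x // x ∈ P.erase p0} → Bool) < Fintype.card (Fin d) := by
    rw [Fintype.card_fun, Fintype.card_coe, Fintype.card_bool, Fintype.card_fin,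
      Finset.card_erase_of_mem hp0, hcard]
    exact Nat.pow_pred_clog_lt_self one_lt_two (lt_of_lt_of_le one_lt_two hd)
  obtain ⟨i, i', hne, hMeq⟩ := Fintype.exists_ne_map_eq_of_card_lt M hlt
  have key : ∀ x ∈ P, (g i x == g i p0) = (g i' x == g i' p0) := by
    intro x hx
    by_cases hxp : x = p0
    · subst hxp; simp
    · exact congrFun hMeq ⟨x, Finset.mem_erase.mpr ⟨hxp, hx⟩⟩
  have hhalf : ∀ x : Fin d → ℝ, g i x = true ↔ (1:ℝ)/2 ≤ x i := by
    intro x; simp [hg]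
  have hhalf' : ∀ x : Fin d → ℝ, g i' x = true ↔ (1:ℝ)/2 ≤ x i' := by
    intro x; simp [hg]
  by_cases hpp : g i p0 = g i' p0
  · -- equal patterns: box (1/2,1) at i, (0,1/2) at i'
    have hgg : ∀ x ∈ P, g i x = g i' x := by
      intro x hx
      have h := key x hx
      rw [hpp] at h
      revert h
      cases g i x <;> cases g i' x <;> cases g i' p0 <;> simp
    refine ⟨fun k => if k = i then 1/2 else 0, fun k => if k = i' then 1/2 else 1,
      ?_, ?_, ?_⟩
    · intro k
      dsimp only
      split_ifs <;> norm_num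
    · rw [show (∏ k, ((if k = i' then (1:ℝ)/2 else 1) - (if k = i then 1/2 else 0))) = 1/4
        from prod_half_half hne _ (by simp [hne, Ne.symm hne]; norm_num)
          (by simp [hne, Ne.symm hne]) (fun k h1 h2 => by simp [h1, h2])]
    · intro x hx hbox
      have h1 := hbox i
      have h2 := hbox i'
      simp only [Set.mem_Ioo, if_pos rfl, if_neg hne, if_neg (Ne.symm hne)] at h1 h2
      norm_num at h1 h2
      have hb1 : g i x = true := (hhalf x).mpr (le_of_lt h1.1)
      have hb2 : g i' x = true := (hgg x hx) ▸ hb1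
      have := (hhalf' x).mp hb2
      linarith [h2.2]
  · -- complementary patterns: box (1/2,1) at both i, i'
    have hgg : ∀ x ∈ P, g i x = !(g i' x) := by
      intro x hx
      have h := key x hx
      have hpp' : g i p0 = !(g i' p0) := by
        revert hpp; cases g i p0 <;> cases g i' p0 <;> simp
      rw [hpp'] at h
      revert h
      cases g i x <;> cases g i' x <;> cases g i' p0 <;> simp
    refine ⟨fun k => if k = i ∨ k = i' then 1/2 else 0, fun _ => 1, ?_, ?_, ?_⟩
    · intro k
      dsimp only
      split_ifs <;> norm_num
    · rw [show (∏ k, ((1:ℝ) - (if k = i ∨ k = i' then (1:ℝ)/2 else 0))) = 1/4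
        from prod_half_half hne _ (by norm_num) (by norm_num)
          (fun k h1 h2 => by simp [h1, h2])]
    · intro x hx hbox
      have h1 := hbox i
      have h2 := hbox i'
      simp only [Set.mem_Ioo, if_pos (Or.inl rfl), if_pos (Or.inr rfl)] at h1 h2
      norm_num at h1 h2
      have hb1 : g i x = true := (hhalf x).mpr (le_of_lt h1.1)
      have hb2 : g i' x = false := by
        have := hgg x hx
        rw [hb1] at this
        revert this; cases g i' x <;> simp
      have hlt' : ¬ ((1:ℝ)/2 ≤ x i') := by
        intro h
        rw [(hhalf' x).mpr h] at hb2
        simp at hb2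
      exact hlt' (le_of_lt h2.1)

/-- For every `d ≥ 2`, the minimal classical dispersion with `n = ⌈log₂ d⌉` points satisfies
`0-disp*(⌈log₂ d⌉, d) ≥ 1/4`; that is, for every point set `P ⊆ [0,1]^d` with
`#P = ⌈log₂ d⌉` there is an axis-parallel box of volume at least `1/4` avoiding `P`. -/
theorem statement_15 (d : ℕ) (hd : 2 ≤ d) :
    1 / 4 ≤ kdispStar d 0 (Nat.clog 2 d) ∧
    ∀ P : Finset (Fin d → ℝ), (∀ x ∈ P, ∀ i, x i ∈ Set.Icc (0:ℝ) 1) →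
      P.card = Nat.clog 2 d →
      ∃ a b : Fin d → ℝ, (∀ i, 0 ≤ a i ∧ a i ≤ b i ∧ b i ≤ 1) ∧
        1 / 4 ≤ ∏ i, (b i - a i) ∧ ∀ x ∈ P, ¬(∀ i, x i ∈ Set.Ioo (a i) (b i)) := by
  have hn : 0 < Nat.clog 2 d := Nat.clog_pos one_lt_two hd
  refine ⟨?_, fun P _ hPc => box_exists d hd P hPc⟩
  apply le_csInf
  · -- nonempty: exhibit a point set
    refine ⟨_, ⟨(Finset.range (Nat.clog 2 d)).image
      (fun j : ℕ => fun _ : Fin d => (j : ℝ) / (Nat.clog 2 d)), ?_, ?_, rfl⟩⟩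
    · intro x hx iidx
      obtain ⟨j, hj, rfl⟩ := Finset.mem_image.mp hx
      rw [Finset.mem_range] at hj
      constructor
      · positivity
      · rw [div_le_one (by exact_mod_cast hn)]
        exact_mod_cast hj.le
    · have hinj : Function.Injective (fun j : ℕ => fun _ : Fin d => (j : ℝ) / (Nat.clog 2 d)) := by
        intro j j' h
        have h0 : ((j : ℝ) / (Nat.clog 2 d)) = ((j' : ℝ) / (Nat.clog 2 d)) :=
          congrFun h ⟨0, by omega⟩
        have hne0 : ((Nat.clog 2 d : ℝ)) ≠ 0 := by exact_mod_cast hn.ne'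
        field_simp at h0
        exact_mod_cast h0
      rw [Finset.card_image_of_injective _ hinj, Finset.card_range]
  · rintro v ⟨P, hP, hPcard, rfl⟩
    obtain ⟨a, b, hab, hvol, hempty⟩ := box_exists d hd P hPcard
    have hmem : (∏ i, (b i - a i)) ∈ { v : ℝ | ∃ a b : Fin d → ℝ,
        (∀ i, 0 ≤ a i ∧ a i ≤ b i ∧ b i ≤ 1) ∧
        (P.filter (fun x => ∀ i, x i ∈ Set.Ioo (a i) (b i))).card ≤ 0 ∧
        v = ∏ i, (b i - a i) } := by
      refine ⟨a, b, hab, ?_, rfl⟩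
      rw [Finset.filter_eq_empty_iff.mpr hempty]
      simp
    have hbdd : BddAbove { v : ℝ | ∃ a b : Fin d → ℝ,
        (∀ i, 0 ≤ a i ∧ a i ≤ b i ∧ b i ≤ 1) ∧
        (P.filter (fun x => ∀ i, x i ∈ Set.Ioo (a i) (b i))).card ≤ 0 ∧
        v = ∏ i, (b i - a i) } := by
      refine ⟨1, ?_⟩
      rintro w ⟨a', b', hab', _, rfl⟩
      exact Finset.prod_le_one (fun i _ => sub_nonneg.mpr (hab' i).2.1)
        (fun i _ => by linarith [(hab' i).1, (hab' i).2.2])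
    calc (1:ℝ)/4 ≤ ∏ i, (b i - a i) := hvol
      _ ≤ kdisp d 0 P := le_csSup hbdd hmem
end
end
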